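/- Suppose the surrogate loss ℓ satisfies ℓ(z) − ℓ(−z) = −z for all z. Then the classification risk R(g) = π·E_{p₊}[ℓ(g(x))] + (1−π)·E_{p₋}[ℓ(−g(x))] equals π·E_{p₊}[−g(x)] + E_{p}[ℓ(−g(x))], where p = π·p₊ + (1−π)·p₋. -/

import Mathlib

/-!
The symmetry condition gives `ℓ (g x) = -g x + ℓ (-g x)` pointwise, which splits `π * E_{p₊}[-g]` off
the positive-class risk; what remains, `π * E_{p₊}[ℓ(-g)] + (1 - π) * E_{p₋}[ℓ(-g)]`, is `E_p[ℓ(-g)]`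
because the integral is linear in the measure.
-/

open MeasureTheory

variable {α : Type*} [MeasurableSpace α]

theorem integral_ofReal_smul_add_ofReal_smul {E : Type*} [NormedAddCommGroup E] [NormedSpace ℝ E]
    {μ ν : Measure α} {f : α → E} {a b : ℝ} (ha : 0 ≤ a) (hb : 0 ≤ b)
    (hμ : Integrable f μ) (hν : Integrable f ν) :
    ∫ x, f x ∂(ENNReal.ofReal a • μ + ENNReal.ofReal b • ν)
      = a • ∫ x, f x ∂μ + b • ∫ x, f x ∂ν := by
  rw [integral_add_measure (hμ.smul_measure ENNReal.ofReal_ne_top)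
      (hν.smul_measure ENNReal.ofReal_ne_top),
    integral_smul_measure, integral_smul_measure,
    ENNReal.toReal_ofReal ha, ENNReal.toReal_ofReal hb]

theorem integral_comp_eq_integral_neg_add_integral_comp_neg {μ : Measure α} {g : α → ℝ}
    {ℓ : ℝ → ℝ} (hℓ : ∀ z, ℓ z - ℓ (-z) = -z)
    (hg : Integrable g μ) (hℓg : Integrable (fun x => ℓ (-g x)) μ) :
    ∫ x, ℓ (g x) ∂μ = ∫ x, -g x ∂μ + ∫ x, ℓ (-g x) ∂μ := by
  have hpointwise : ∀ x, ℓ (g x) = -g x + ℓ (-g x) := fun x => by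
    linarith [hℓ (g x)]
  simp_rw [hpointwise]
  exact integral_add hg.neg hℓg

theorem pu_risk_equivalence_general {d : ℕ}
    (pP pN : Measure (Fin d → ℝ))
    (π : ℝ) (hπ0 : 0 ≤ π) (hπ1 : π ≤ 1)
    (p : Measure (Fin d → ℝ))
    (hp : p = ENNReal.ofReal π • pP + ENNReal.ofReal (1 - π) • pN)
    (g : (Fin d → ℝ) → ℝ)
    (ℓ : ℝ → ℝ)
    (hcomp : ∀ z : ℝ, ℓ z - ℓ (-z) = -z)
    (hgP : Integrable g pP)
    (hIPm : Integrable (fun x => ℓ (-g x)) pP)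
    (hINm : Integrable (fun x => ℓ (-g x)) pN) :
    π * (∫ x, ℓ (g x) ∂pP) + (1 - π) * (∫ x, ℓ (-g x) ∂pN)
      = π * (∫ x, -g x ∂pP) + ∫ x, ℓ (-g x) ∂p := by
  rw [hp, integral_ofReal_smul_add_ofReal_smul hπ0 (sub_nonneg.mpr hπ1) hIPm hINm,
    integral_comp_eq_integral_neg_add_integral_comp_neg hcomp hgP hIPm, smul_eq_mul, smul_eq_mul]
  ring

theorem pu_risk_equivalence {d : ℕ}
    (pP pN : Measure (Fin d → ℝ)) [IsProbabilityMeasure pP] [IsProbabilityMeasure pN]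
    (π : ℝ) (hπ0 : 0 ≤ π) (hπ1 : π ≤ 1)
    (p : Measure (Fin d → ℝ))
    (hp : p = ENNReal.ofReal π • pP + ENNReal.ofReal (1 - π) • pN)
    (g : (Fin d → ℝ) → ℝ) (hg : Measurable g)
    (ℓ : ℝ → ℝ) (hℓ : Measurable ℓ)
    (hcomp : ∀ z : ℝ, ℓ z - ℓ (-z) = -z)
    (hgP : Integrable g pP) (hgN : Integrable g pN)
    (hIPp : Integrable (fun x => ℓ (g x)) pP)
    (hIPm : Integrable (fun x => ℓ (-g x)) pP)
    (hINp : Integrable (fun x => ℓ (g x)) pN)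
    (hINm : Integrable (fun x => ℓ (-g x)) pN) :
    π * (∫ x, ℓ (g x) ∂pP) + (1 - π) * (∫ x, ℓ (-g x) ∂pN)
      = π * (∫ x, -g x ∂pP) + ∫ x, ℓ (-g x) ∂p :=
  pu_risk_equivalence_general pP pN π hπ0 hπ1 p hp g ℓ hcomp hgP hIPm hINm
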